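/- Conversely, if a sequence of adapted random sets (C_t)_{t≥1} satisfies P(θ* ∈ C_τ) ≥ 1 − α for every (possibly infinite) stopping time τ, then P(∀ t ∈ ℕ: θ* ∈ C_t) ≥ 1 − α. -/
import Mathlib


open MeasureTheory

/-- If a sequence of adapted random sets has coverage at least `1 - α` at every (possibly
infinite) stopping time (with `θ* ∈ C_∞` holding vacuously), then it has uniform-in-time
coverage at least `1 - α`. -/
theorem coverage_at_stopping_times_implies_uniform_coverage {Ω Θ : Type*}
    {m : MeasurableSpace Ω} {μ : Measure Ω} [IsProbabilityMeasure μ]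
    {𝒢 : Filtration ℕ m} (C : ℕ → Ω → Set Θ) (θstar : Θ)
    (hadapted : ∀ t : ℕ, MeasurableSet[𝒢 t] {ω | θstar ∉ C t ω})
    {α : ℝ} (hα0 : 0 < α) (hα1 : α < 1)
    (hcov : ∀ τ : Ω → ℕ∞, (∀ t : ℕ, MeasurableSet[𝒢 t] {ω | τ ω ≤ t}) →
      ENNReal.ofReal (1 - α) ≤ μ {ω | ∀ t : ℕ, τ ω = t → θstar ∈ C t ω}) :
    ENNReal.ofReal (1 - α) ≤ μ {ω | ∀ t : ℕ, θstar ∈ C t ω} := by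
  classical
  set τ : Ω → ℕ∞ := fun ω =>
    if h : ∃ t, θstar ∉ C t ω then ((Nat.find h : ℕ) : ℕ∞) else ⊤ with hτ
  have hst : ∀ t : ℕ, MeasurableSet[𝒢 t] {ω | τ ω ≤ t} := by
    intro t
    have : {ω | τ ω ≤ t} = ⋃ s ∈ Finset.range (t + 1), {ω | θstar ∉ C s ω} := by
      ext ω
      simp only [Set.mem_setOf_eq, Set.mem_iUnion, Finset.mem_range, Nat.lt_succ_iff]
      constructor
      · intro hle
        by_cases h : ∃ s, θstar ∉ C s ω
        · refine ⟨Nat.find h, ?_, Nat.find_spec h⟩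
          simp only [hτ, dif_pos h] at hle
          exact_mod_cast hle
        · simp [hτ, dif_neg h] at hle
      · rintro ⟨s, hs, hmem⟩
        have h : ∃ u, θstar ∉ C u ω := ⟨s, hmem⟩
        simp only [hτ, dif_pos h]
        exact_mod_cast le_trans (Nat.cast_le.mpr (Nat.find_min' h hmem)) (Nat.cast_le.mpr hs)
    rw [this]
    exact MeasurableSet.biUnion (Finset.range (t + 1)).countable_toSet
      (fun s hs => 𝒢.mono (Nat.lt_succ_iff.mp (Finset.mem_range.mp hs)) _ (hadapted s))
  have key : {ω | ∀ t : ℕ, τ ω = t → θstar ∈ C t ω} = {ω | ∀ t : ℕ, θstar ∈ C t ω} := by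
    ext ω
    simp only [Set.mem_setOf_eq]
    constructor
    · intro h t
      by_contra hmem
      have hex : ∃ s, θstar ∉ C s ω := ⟨t, hmem⟩
      have := h (Nat.find hex) (by simp [hτ, dif_pos hex])
      exact Nat.find_spec hex this
    · intro h t ht
      exact h t
  have := hcov τ hst
  rwa [key] at this
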